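/- arXiv:1301.2195 — 2 statements merged into one kernel-verified Lean document; each statement's English description precedes it below -/
import Mathlib

section
/- For any subgraph G of Q_n, the sum over all vertices v of G of the maximum length of an increasing geodesic in G ending at v is at least 2|E(G)| (equivalently, at least d|G| where d is the average degree). -/
open SimpleGraph Finset
open scoped symmDiff

/-- The hypercube `Q_n` on vertex set `{0,1}^n`: two vertices are adjacent iff they
differ in exactly one coordinate. -/
def Q (n : ℕ) : SimpleGraph (Fin n → Bool) where
  Adj x y := hammingDist x y = 1
  symm := ⟨fun x y h => (hammingDist_comm y x).trans h⟩
  loopless := ⟨fun x h => by simp at h⟩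

/-- The coordinate direction of a step from `x` to `y` (for an edge of `Q n`, the unique
coordinate where they differ), as a natural number. -/
def dir {n : ℕ} (x y : Fin n → Bool) : ℕ :=
  (Finset.univ.filter fun i => x i ≠ y i).sup fun i => (i : ℕ)

/-- The list of coordinate directions of the edges of a walk in `Q n`. -/
def dirs {n : ℕ} {u v : Fin n → Bool} (p : (Q n).Walk u v) : List ℕ :=
  p.darts.map fun d => dir d.fst d.snd

/-- A geodesic in `Q n`: a path no two of whose edges lie in the same coordinate
direction. -/
def IsGeodesic {n : ℕ} {u v : Fin n → Bool} (p : (Q n).Walk u v) : Prop :=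
  p.IsPath ∧ (dirs p).Nodup

/-- An increasing geodesic in `Q n`: a path whose successive edge directions strictly
increase. -/
def IsIncGeodesic {n : ℕ} {u v : Fin n → Bool} (p : (Q n).Walk u v) : Prop :=
  p.IsPath ∧ (dirs p).Chain' (· < ·)

/-- `maxInc G x` is the maximum length of an increasing geodesic contained in the
subgraph `G` of `Q n` and ending at the vertex `x`. -/
noncomputable def maxInc {n : ℕ} (G : (Q n).Subgraph) (x : Fin n → Bool) : ℕ :=
  sSup {l | ∃ u, ∃ p : (Q n).Walk u x, p.toSubgraph ≤ G ∧ IsIncGeodesic p ∧ p.length = l}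

/-!
Induct on the largest edge direction `i` occurring in `G`, and let `G'` be `G` minus its edges of
direction `i`. All vertices of an increasing geodesic of `G'` ending at `x` agree with `x` in
coordinate `i`, so if `G` joins `x` to `flipCoord i x`, appending that edge gives
`L_G(flipCoord i x) ≥ L_{G'}(x) + 1`. Summing over both endpoints of the direction-`i` edges, and
using that `flipCoord i` permutes the vertices, the sum of `L` grows by at least twice the number
of deleted edges.
-/

namespace SimpleGraph

lemma Walk.apply_eq_of_forall_dart_apply_eq {V β : Type*} {G : SimpleGraph V} (f : V → β)
    {u v : V} (p : G.Walk u v) (h : ∀ d ∈ p.darts, f d.fst = f d.snd) :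
    ∀ w ∈ p.support, f w = f v := by
  induction p with
  | nil => simp
  | cons hadj q ih =>
    simp only [darts_cons, List.mem_cons, forall_eq_or_imp, support_cons] at h ⊢
    exact ⟨h.1.trans (ih h.2 _ q.start_mem_support), ih h.2⟩

lemma Subgraph.edgeSet_deleteEdges {V : Type*} {G : SimpleGraph V} (G' : G.Subgraph)
    (s : Set (Sym2 V)) : (G'.deleteEdges s).edgeSet = G'.edgeSet \ s := by
  ext e
  induction e using Sym2.ind with
  | _ a b => simp [Subgraph.deleteEdges_adj]

end SimpleGraph

section Hypercube

variable {n : ℕ}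

def flipCoord (i : Fin n) (x : Fin n → Bool) : Fin n → Bool :=
  Function.update x i (!x i)

@[simp] lemma flipCoord_self (i : Fin n) (x : Fin n → Bool) : flipCoord i x i = !x i :=
  Function.update_self ..

lemma flipCoord_of_ne {i j : Fin n} (h : j ≠ i) (x : Fin n → Bool) : flipCoord i x j = x j :=
  Function.update_of_ne h ..

lemma flipCoord_involutive (i : Fin n) : Function.Involutive (flipCoord i) := by
  intro x
  funext j
  by_cases h : j = i
  · subst h; simp
  · simp [flipCoord_of_ne h]

lemma flipCoord_ne (i : Fin n) (x : Fin n → Bool) : flipCoord i x ≠ x :=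
  fun h => by simpa using congrFun h i

lemma filter_ne_flipCoord (i : Fin n) (x : Fin n → Bool) :
    (univ.filter fun j => x j ≠ flipCoord i x j) = {i} := by
  ext j
  by_cases h : j = i
  · subst h; simp
  · simp [flipCoord_of_ne h, h]

lemma Q_adj_flipCoord (i : Fin n) (x : Fin n → Bool) : (Q n).Adj x (flipCoord i x) := by
  change (univ.filter fun j => x j ≠ flipCoord i x j).card = 1
  rw [filter_ne_flipCoord, card_singleton]

lemma dir_flipCoord (i : Fin n) (x : Fin n → Bool) : dir x (flipCoord i x) = i := by
  rw [dir, filter_ne_flipCoord, sup_singleton]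

lemma exists_eq_flipCoord_of_Q_adj {x y : Fin n → Bool} (h : (Q n).Adj x y) :
    ∃ i, y = flipCoord i x := by
  obtain ⟨i, hi⟩ := card_eq_one.mp (show (univ.filter fun j => x j ≠ y j).card = 1 from h)
  refine ⟨i, funext fun j => ?_⟩
  have hj : x j ≠ y j ↔ j = i := by simpa using Finset.ext_iff.mp hi j
  by_cases hji : j = i
  · subst hji
    simpa [eq_comm] using Bool.eq_not_iff.mpr (Ne.symm (hj.mpr rfl))
  · rw [flipCoord_of_ne hji]
    exact (not_not.mp (hj.not.mpr hji)).symm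

lemma eq_flipCoord_of_Q_adj {x y : Fin n → Bool} (h : (Q n).Adj x y) {i : Fin n}
    (hi : dir x y = i) : y = flipCoord i x := by
  obtain ⟨j, rfl⟩ := exists_eq_flipCoord_of_Q_adj h
  rw [dir_flipCoord, Fin.val_inj] at hi
  rw [hi]

lemma dir_lt_of_Q_adj {x y : Fin n → Bool} (h : (Q n).Adj x y) : dir x y < n := by
  obtain ⟨i, rfl⟩ := exists_eq_flipCoord_of_Q_adj h
  rw [dir_flipCoord]
  exact i.isLt

lemma apply_eq_of_Q_adj_of_dir_ne {x y : Fin n → Bool} (h : (Q n).Adj x y) {i : Fin n}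
    (hi : dir x y ≠ i) : x i = y i := by
  obtain ⟨j, rfl⟩ := exists_eq_flipCoord_of_Q_adj h
  rw [dir_flipCoord, ne_eq, Fin.val_inj] at hi
  exact (flipCoord_of_ne (Ne.symm hi) x).symm

def dirEdges (i : Fin n) : Set (Sym2 (Fin n → Bool)) :=
  Set.range fun x => s(x, flipCoord i x)

lemma two_mul_ncard_edgeSet_inter_dirEdges_le (G : (Q n).Subgraph) [DecidableRel G.Adj]
    (i : Fin n) : 2 * (G.edgeSet ∩ dirEdges i).ncard ≤ #{x | G.Adj x (flipCoord i x)} := by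
  set C : Finset (Fin n → Bool) := {x | G.Adj x (flipCoord i x)}
  have hsub : G.edgeSet ∩ dirEdges i ⊆ C.image fun x => s(x, flipCoord i x) := by
    rintro _ ⟨hx, x, rfl⟩
    exact mem_coe.mpr (mem_image.mpr ⟨x, by simpa [C] using hx, rfl⟩)
  have hfiber : ∀ e ∈ C.image fun x => s(x, flipCoord i x),
      2 ≤ #{x ∈ C | s(x, flipCoord i x) = e} := by
    simp only [mem_image]
    rintro _ ⟨x, hx, rfl⟩
    have hpair : {x, flipCoord i x} ⊆ {y ∈ C | s(y, flipCoord i y) = s(x, flipCoord i x)} := by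
      simp only [C, mem_filter, mem_univ, true_and] at hx
      rw [insert_subset_iff, singleton_subset_iff]
      refine ⟨mem_filter.mpr ⟨by simpa [C] using hx, rfl⟩, mem_filter.mpr ⟨?_, ?_⟩⟩
      · simpa [C, flipCoord_involutive i x] using hx.symm
      · rw [flipCoord_involutive i x, Sym2.eq_swap]
    calc 2 = #{x, flipCoord i x} := (card_pair (flipCoord_ne i x).symm).symm
      _ ≤ _ := card_le_card hpair
  calc 2 * (G.edgeSet ∩ dirEdges i).ncard
      ≤ 2 * #(C.image fun x => s(x, flipCoord i x)) := by
        gcongr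
        exact (Set.ncard_le_ncard hsub).trans_eq (Set.ncard_coe_finset _)
    _ ≤ #C := mul_card_image_le_card C 2 hfiber

lemma dir_lt_of_adj_deleteEdges_dirEdges {G : (Q n).Subgraph} {i : Fin n}
    (hG : ∀ a b, G.Adj a b → dir a b ≤ i) (a b : Fin n → Bool)
    (h : (G.deleteEdges (dirEdges i)).Adj a b) : dir a b < i := by
  obtain ⟨hab, hnot⟩ := (Subgraph.deleteEdges_adj _ a b).mp h
  refine (hG a b hab).lt_of_ne fun hi => hnot ⟨a, ?_⟩
  change s(a, flipCoord i a) = s(a, b)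
  rw [← eq_flipCoord_of_Q_adj hab.adj_sub hi]

def incGeodesicLengths (G : (Q n).Subgraph) (x : Fin n → Bool) : Set ℕ :=
  {l | ∃ u, ∃ p : (Q n).Walk u x, p.toSubgraph ≤ G ∧ IsIncGeodesic p ∧ p.length = l}

lemma maxInc_eq_sSup (G : (Q n).Subgraph) (x : Fin n → Bool) :
    maxInc G x = sSup (incGeodesicLengths G x) :=
  rfl

lemma bddAbove_incGeodesicLengths (G : (Q n).Subgraph) (x : Fin n → Bool) :
    BddAbove (incGeodesicLengths G x) :=
  ⟨Fintype.card (Fin n → Bool), by rintro _ ⟨_, p, -, hp, rfl⟩; exact hp.1.length_lt.le⟩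

lemma IsIncGeodesic.length_le_maxInc {G : (Q n).Subgraph} {u x : Fin n → Bool}
    {p : (Q n).Walk u x} (hp : IsIncGeodesic p) (hG : p.toSubgraph ≤ G) :
    p.length ≤ maxInc G x :=
  le_csSup (bddAbove_incGeodesicLengths G x) ⟨u, p, hG, hp, rfl⟩

lemma exists_isIncGeodesic_length_eq_maxInc {G : (Q n).Subgraph} {x : Fin n → Bool}
    (hx : x ∈ G.verts) :
    ∃ u, ∃ p : (Q n).Walk u x, p.toSubgraph ≤ G ∧ IsIncGeodesic p ∧ p.length = maxInc G x :=
  Nat.sSup_mem (s := incGeodesicLengths G x)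
    ⟨0, x, .nil, (singletonSubgraph_le_iff x G).mpr hx, ⟨.nil, List.isChain_nil⟩, rfl⟩
    (bddAbove_incGeodesicLengths G x)

lemma maxInc_eq_zero_of_notMem {G : (Q n).Subgraph} {x : Fin n → Bool} (hx : x ∉ G.verts) :
    maxInc G x = 0 := by
  have hempty : incGeodesicLengths G x = ∅ :=
    Set.eq_empty_of_forall_notMem fun _ ⟨_, p, hG, _⟩ => hx (hG.1 p.end_mem_verts_toSubgraph)
  rw [maxInc_eq_sSup, hempty, csSup_empty, Nat.bot_eq_zero]

lemma maxInc_mono {G G' : (Q n).Subgraph} (h : G' ≤ G) (x : Fin n → Bool) :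
    maxInc G' x ≤ maxInc G x := by
  by_cases hx : x ∈ G'.verts
  · obtain ⟨_, p, hG', hp, hlen⟩ := exists_isIncGeodesic_length_eq_maxInc hx
    exact hlen ▸ hp.length_le_maxInc (hG'.trans h)
  · simp [maxInc_eq_zero_of_notMem hx]

lemma finsum_mem_verts_maxInc (G : (Q n).Subgraph) :
    ∑ᶠ x ∈ G.verts, maxInc G x = ∑ x, maxInc G x := by
  rw [finsum_mem_def, Set.indicator_eq_self.mpr, finsum_eq_sum_of_fintype]
  exact fun x hx => by_contra fun h => hx (maxInc_eq_zero_of_notMem h)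

lemma IsIncGeodesic.concat_flipCoord {u x : Fin n → Bool} {p : (Q n).Walk u x}
    (hp : IsIncGeodesic p) {i : Fin n} (hdir : ∀ d ∈ p.darts, dir d.fst d.snd < i) :
    IsIncGeodesic (p.concat (Q_adj_flipCoord i x)) := by
  have hcoord : ∀ w ∈ p.support, w i = x i :=
    p.apply_eq_of_forall_dart_apply_eq (· i) fun d hd =>
      apply_eq_of_Q_adj_of_dir_ne d.adj (hdir d hd).ne
  refine ⟨hp.1.concat (fun hmem => by simpa using hcoord _ hmem) _, ?_⟩
  rw [dirs, Walk.darts_concat, List.concat_eq_append, List.map_append]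
  refine List.IsChain.append hp.2 (List.isChain_singleton _) ?_
  simp only [List.map_cons, List.map_nil, List.head?_cons, Option.mem_def, Option.some.injEq,
    forall_eq', dir_flipCoord]
  intro a ha
  obtain ⟨d, hd, rfl⟩ := List.mem_map.mp (List.mem_of_mem_getLast? ha)
  exact hdir d hd

lemma maxInc_add_one_le_maxInc_flipCoord {G G' : (Q n).Subgraph} (hle : G' ≤ G) {i : Fin n}
    (hG' : ∀ a b, G'.Adj a b → dir a b < i) {x : Fin n → Bool} (hx : x ∈ G'.verts)
    (hG : G.Adj x (flipCoord i x)) : maxInc G' x + 1 ≤ maxInc G (flipCoord i x) := by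
  obtain ⟨u, p, hpG', hp, hlen⟩ := exists_isIncGeodesic_length_eq_maxInc hx
  have hdir : ∀ d ∈ p.darts, dir d.fst d.snd < i := fun d hd =>
    hG' _ _ (hpG'.2 (Walk.adj_toSubgraph_iff_mem_edges.mpr (List.mem_map_of_mem hd)))
  have hsub : (p.concat (Q_adj_flipCoord i x)).toSubgraph ≤ G := by
    rw [Walk.concat_eq_append, Walk.toSubgraph_append, Walk.toSubgraph_cons_nil_eq_subgraphOfAdj]
    exact sup_le (hpG'.trans hle) (subgraphOfAdj_le_of_adj G hG)
  simpa [hlen] using (hp.concat_flipCoord hdir).length_le_maxInc hsub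

lemma maxInc_deleteEdges_add_le {G : (Q n).Subgraph} [DecidableRel G.Adj] {i : Fin n}
    (hG : ∀ a b, G.Adj a b → dir a b ≤ i) (x : Fin n → Bool) :
    maxInc (G.deleteEdges (dirEdges i)) x + maxInc (G.deleteEdges (dirEdges i)) (flipCoord i x)
        + 2 * (if G.Adj x (flipCoord i x) then 1 else 0)
      ≤ maxInc G x + maxInc G (flipCoord i x) := by
  have hle := Subgraph.deleteEdges_le (G' := G) (dirEdges i)
  split_ifs with hx
  · have hG' := dir_lt_of_adj_deleteEdges_dirEdges hG
    have h₁ := maxInc_add_one_le_maxInc_flipCoord hle hG' hx.fst_mem hx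
    have h₂ := maxInc_add_one_le_maxInc_flipCoord hle hG' hx.snd_mem
      (by rwa [flipCoord_involutive i x, G.adj_comm])
    rw [flipCoord_involutive i x] at h₂
    omega
  · have := maxInc_mono hle x
    have := maxInc_mono hle (flipCoord i x)
    omega

lemma sum_maxInc_deleteEdges_add_le {G : (Q n).Subgraph} [DecidableRel G.Adj] {i : Fin n}
    (hG : ∀ a b, G.Adj a b → dir a b ≤ i) :
    ∑ x, maxInc (G.deleteEdges (dirEdges i)) x + #{x | G.Adj x (flipCoord i x)}
      ≤ ∑ x, maxInc G x := by
  have hflip (f : (Fin n → Bool) → ℕ) : ∑ x, f (flipCoord i x) = ∑ x, f x :=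
    Fintype.sum_bijective _ (flipCoord_involutive i).bijective _ _ fun _ => rfl
  have := sum_le_sum fun x (_ : x ∈ univ) => maxInc_deleteEdges_add_le hG x
  simp only [sum_add_distrib, hflip, ← mul_sum, sum_boole, Nat.cast_id] at this
  omega

lemma two_mul_ncard_edgeSet_le_sum_maxInc_of_dir_lt (k : ℕ) (G : (Q n).Subgraph)
    (hG : ∀ a b, G.Adj a b → dir a b < k) : 2 * G.edgeSet.ncard ≤ ∑ x, maxInc G x := by
  induction k generalizing G with
  | zero =>
    have : G.edgeSet = ∅ := Set.eq_empty_of_forall_notMem fun e => by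
      induction e using Sym2.ind with
      | _ a b => exact fun h => (hG a b h).not_ge (Nat.zero_le _)
    simp [this]
  | succ k ih =>
    classical
    by_cases hk : k < n
    · have hG' : ∀ a b, G.Adj a b → dir a b ≤ (⟨k, hk⟩ : Fin n) := fun a b h =>
        Nat.lt_succ_iff.mp (hG a b h)
      have hdel := ih _ (dir_lt_of_adj_deleteEdges_dirEdges hG')
      have hsplit := Set.ncard_inter_add_ncard_sdiff_eq_ncard G.edgeSet (dirEdges ⟨k, hk⟩)
      rw [← Subgraph.edgeSet_deleteEdges] at hsplit
      have := two_mul_ncard_edgeSet_inter_dirEdges_le G ⟨k, hk⟩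
      have := sum_maxInc_deleteEdges_add_le hG'
      omega
    · exact ih G fun a b h => (dir_lt_of_Q_adj h.adj_sub).trans_le (not_lt.mp hk)

end Hypercube

/-- For any subgraph `G` of `Q n`, the sum over the vertices `v` of `G` of the maximum
length of an increasing geodesic in `G` ending at `v` is at least `2|E(G)|`
(equivalently, at least `d|G|` where `d` is the average degree). -/
theorem stmt1 (n : ℕ) (G : (Q n).Subgraph) :
    2 * G.edgeSet.ncard ≤ ∑ᶠ v ∈ G.verts, maxInc G v := by
  rw [finsum_mem_verts_maxInc]
  exact two_mul_ncard_edgeSet_le_sum_maxInc_of_dir_lt n G fun _ _ h => dir_lt_of_Q_adj h.adj_sub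
end

section
/- For every 2-colouring of the edges of Q_n, there is a monochromatic geodesic of length ⌈n/2⌉. -/
open SimpleGraph Finset
open scoped symmDiff

/-! For a colour `b`, let `f_i^b(x)` be the length of a longest `b`-coloured geodesic ending at `x`
whose directions increase and are all below `i`. The edge `{x, x^i}`, of colour `b` say, extends
the geodesic ending at `x^i`, so `f_{i+1}^b(x) ≥ f_i^b(x^i) + 1`, while
`f_{i+1}^{¬b}(x) ≥ f_i^{¬b}(x)`.
As `x ↦ x^i` is a bijection preserving the colour of `{x, x^i}`, summing over `x` shows that
`∑_x (f_i^true(x) + f_i^false(x))` grows by at least `2^n` with each direction `i`. Hence some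
vertex has `f_n^true(x) + f_n^false(x) ≥ n`, and one colour gives a geodesic of length `⌈n/2⌉`
ending there. -/

section Hypercube

variable {n : ℕ}

-- The identity when `i ≥ n`, which is why `incLen` tests `i < n`.
def flipAt (x : Fin n → Bool) (i : ℕ) : Fin n → Bool :=
  fun j => if (j : ℕ) = i then !x j else x j

@[simp]
lemma flipAt_flipAt (x : Fin n → Bool) (i : ℕ) : flipAt (flipAt x i) i = x := by
  funext j
  by_cases h : (j : ℕ) = i <;> simp [flipAt, h]

lemma flipAt_involutive (i : ℕ) : Function.Involutive fun x : Fin n → Bool => flipAt x i :=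
  (flipAt_flipAt · i)

lemma flipAt_ne_iff (x : Fin n → Bool) (i : ℕ) (j : Fin n) : x j ≠ flipAt x i j ↔ (j : ℕ) = i := by
  by_cases h : (j : ℕ) = i <;> simp [flipAt, h]

lemma Q_adj_flipAt (x : Fin n → Bool) {i : ℕ} (hi : i < n) : (Q n).Adj x (flipAt x i) := by
  have : ({j | x j ≠ flipAt x i j} : Finset (Fin n)) = {⟨i, hi⟩} := by
    ext j
    simp [flipAt_ne_iff, Fin.ext_iff]
  simp [Q, hammingDist, this]

lemma dir_eq_of_adj_of_ne {x y : Fin n → Bool} (h : (Q n).Adj x y) {j : Fin n}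
    (hj : x j ≠ y j) : dir x y = j := by
  have hsingle : ({j | x j ≠ y j} : Finset (Fin n)) = {j} :=
    (Finset.eq_singleton_iff_nonempty_unique_mem.mpr
      ⟨⟨j, by simpa using hj⟩, fun k hk => Finset.card_le_one.mp h.le _ hk _ (by simpa using hj)⟩)
  simp [dir, hsingle]

lemma dir_flipAt_left (x : Fin n → Bool) {i : ℕ} (hi : i < n) : dir (flipAt x i) x = i :=
  dir_eq_of_adj_of_ne (Q_adj_flipAt x hi).symm ((flipAt_ne_iff x i ⟨i, hi⟩).mpr rfl).symm

end Hypercube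

section Walks

variable {n : ℕ}

@[simp]
lemma dirs_cons {u v w : Fin n → Bool} (h : (Q n).Adj u v) (p : (Q n).Walk v w) :
    dirs (.cons h p) = dir u v :: dirs p := by
  simp [dirs]

@[simp]
lemma dirs_concat {u v w : Fin n → Bool} (p : (Q n).Walk u v) (h : (Q n).Adj v w) :
    dirs (p.concat h) = dirs p ++ [dir v w] := by
  simp [dirs, Walk.darts_concat]

@[simp]
lemma dirs_drop {u v : Fin n → Bool} (p : (Q n).Walk u v) (k : ℕ) :
    dirs (p.drop k) = (dirs p).drop k := by
  simp [dirs, Walk.darts_drop, List.map_drop]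

lemma coe_mem_dirs_of_mem_support {a b : Fin n → Bool} (p : (Q n).Walk a b)
    {w : Fin n → Bool} (hw : w ∈ p.support) {j : Fin n} (hj : w j ≠ a j) : (j : ℕ) ∈ dirs p := by
  induction p with
  | nil => simp_all
  | @cons a a' b h p ih =>
    rcases List.mem_cons.mp (Walk.support_cons h p ▸ hw) with rfl | hw'
    · exact absurd rfl hj
    · by_cases hja : w j = a' j
      · simp [dir_eq_of_adj_of_ne h (hja ▸ Ne.symm hj)]
      · simp [ih hw' hja]

lemma isGeodesic_of_nodup_dirs {u v : Fin n → Bool} (p : (Q n).Walk u v)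
    (hp : (dirs p).Nodup) : IsGeodesic p := by
  refine ⟨?_, hp⟩
  induction p with
  | nil => exact .nil
  | @cons a a' b h p ih =>
    rw [dirs_cons, List.nodup_cons] at hp
    refine .cons (ih hp.2) fun ha => ?_
    obtain ⟨j, hj⟩ := Function.ne_iff.mp h.ne
    exact hp.1 (dir_eq_of_adj_of_ne h hj ▸ coe_mem_dirs_of_mem_support p ha hj)

end Walks

section IncreasingGeodesics

variable {n : ℕ} (c : Sym2 (Fin n → Bool) → Bool)

def HasMonoGeodesic (b : Bool) (i : ℕ) (x : Fin n → Bool) (l : ℕ) : Prop :=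
  ∃ u, ∃ p : (Q n).Walk u x, p.length = l ∧ (∀ d ∈ dirs p, d < i) ∧ (dirs p).Nodup ∧
    ∀ e ∈ p.edges, c e = b

variable {c}

lemma hasMonoGeodesic_nil (b : Bool) (i : ℕ) (x : Fin n → Bool) : HasMonoGeodesic c b i x 0 :=
  ⟨x, .nil, rfl, by simp [dirs], by simp [dirs], by simp⟩

lemma HasMonoGeodesic.mono_dir {b : Bool} {i j : ℕ} {x : Fin n → Bool} {l : ℕ}
    (h : HasMonoGeodesic c b i x l) (hij : i ≤ j) : HasMonoGeodesic c b j x l :=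
  let ⟨u, p, hl, hlt, hnd, hc⟩ := h
  ⟨u, p, hl, fun d hd => (hlt d hd).trans_le hij, hnd, hc⟩

lemma HasMonoGeodesic.of_le {b : Bool} {i : ℕ} {x : Fin n → Bool} {l k : ℕ}
    (h : HasMonoGeodesic c b i x l) (hk : k ≤ l) : HasMonoGeodesic c b i x k := by
  obtain ⟨u, p, rfl, hlt, hnd, hc⟩ := h
  refine ⟨_, p.drop (p.length - k), by simp; omega, fun d hd => hlt d ?_,
    (dirs_drop p _ ▸ hnd.sublist (List.drop_sublist _ _)), fun e he => hc e ?_⟩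
  · exact List.mem_of_mem_drop (dirs_drop p _ ▸ hd)
  · exact List.mem_of_mem_drop (Walk.edges_drop p _ ▸ he)

lemma HasMonoGeodesic.extend {b : Bool} {i : ℕ} {x : Fin n → Bool} {l : ℕ}
    (h : HasMonoGeodesic c b i (flipAt x i) l) (hi : i < n) (hc : c s(x, flipAt x i) = b) :
    HasMonoGeodesic c b (i + 1) x (l + 1) := by
  obtain ⟨u, p, rfl, hlt, hnd, hcol⟩ := h
  have hadj : (Q n).Adj (flipAt x i) x := (Q_adj_flipAt x hi).symm
  refine ⟨u, p.concat hadj, by simp, ?_, ?_, ?_⟩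
  · simp only [dirs_concat, dir_flipAt_left x hi, List.mem_append, List.mem_singleton]
    rintro d (hd | rfl)
    · exact (hlt d hd).trans (Nat.lt_succ_self i)
    · exact Nat.lt_succ_self d
  · simp only [dirs_concat, dir_flipAt_left x hi, List.nodup_append, List.nodup_singleton,
      List.mem_singleton]
    exact ⟨hnd, trivial, fun d hd _ he => he ▸ (hlt d hd).ne⟩
  · simp only [Walk.edges_concat, List.concat_eq_append, List.mem_append, List.mem_singleton]
    rintro e (he | rfl)
    · exact hcol e he
    · rwa [Sym2.eq_swap]

variable (c)

def incLen (b : Bool) : ℕ → (Fin n → Bool) → ℕ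
  | 0, _ => 0
  | i + 1, x =>
    if i < n ∧ c s(x, flipAt x i) = b then max (incLen b i x) (incLen b i (flipAt x i) + 1)
    else incLen b i x

lemma incLen_le_succ (b : Bool) (i : ℕ) (x : Fin n → Bool) :
    incLen c b i x ≤ incLen c b (i + 1) x := by
  rw [incLen]
  split_ifs
  exacts [le_max_left _ _, le_rfl]

lemma incLen_flipAt_add_one_le {i : ℕ} (hi : i < n) (x : Fin n → Bool) :
    incLen c (c s(x, flipAt x i)) i (flipAt x i) + 1 ≤ incLen c (c s(x, flipAt x i)) (i + 1) x := by
  rw [incLen, if_pos ⟨hi, rfl⟩]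
  exact le_max_right _ _

lemma hasMonoGeodesic_incLen (b : Bool) (i : ℕ) (x : Fin n → Bool) :
    HasMonoGeodesic c b i x (incLen c b i x) := by
  induction i generalizing x with
  | zero => exact hasMonoGeodesic_nil b 0 x
  | succ i ih =>
    rw [incLen]
    split_ifs with h
    · rcases max_choice (incLen c b i x) (incLen c b i (flipAt x i) + 1) with hmax | hmax <;>
        rw [hmax]
      · exact (ih x).mono_dir i.le_succ
      · exact (ih (flipAt x i)).extend h.1 h.2
    · exact (ih x).mono_dir i.le_succ

end IncreasingGeodesics

lemma Fintype.sum_bool_eq_add_not {M : Type*} [AddCommMonoid M] (g : Bool → M) (b : Bool) :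
    ∑ b', g b' = g b + g (!b) := by
  cases b <;> simp [add_comm]

section Counting

variable {n : ℕ} (c : Sym2 (Fin n → Bool) → Bool)

lemma sum_incLen_add_one_le {i : ℕ} (hi : i < n) :
    ∑ x, (∑ b, incLen c b i x + 1) ≤ ∑ x, ∑ b, incLen c b (i + 1) x := by
  set col : (Fin n → Bool) → Bool := fun x => c s(x, flipAt x i)
  have hcol (x : Fin n → Bool) : col (flipAt x i) = col x := by
    simp only [col, flipAt_flipAt, Sym2.eq_swap]
  have hswap : ∑ x, incLen c (col x) i (flipAt x i) = ∑ x, incLen c (col x) i x := by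
    simpa [hcol] using Equiv.sum_comp ((flipAt_involutive i).toPerm _) fun x => incLen c (col x) i x
  have hsplit (x : Fin n → Bool) :
      ∑ b, incLen c b i x = incLen c (col x) i x + incLen c (!col x) i x :=
    Fintype.sum_bool_eq_add_not _ _
  calc ∑ x, (∑ b, incLen c b i x + 1)
      = ∑ x, incLen c (col x) i x + ∑ x, incLen c (!col x) i x + ∑ _x : Fin n → Bool, 1 := by
        simp only [hsplit, Finset.sum_add_distrib]
    _ = ∑ x, (incLen c (col x) i (flipAt x i) + 1 + incLen c (!col x) i x) := by
        rw [← hswap]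
        simp only [Finset.sum_add_distrib]
        ring
    _ ≤ ∑ x, ∑ b, incLen c b (i + 1) x := by
        refine Finset.sum_le_sum fun x _ => ?_
        rw [Fintype.sum_bool_eq_add_not _ (col x)]
        exact add_le_add (incLen_flipAt_add_one_le c hi x) (incLen_le_succ c _ i x)

lemma sum_le_sum_incLen {i : ℕ} (hi : i ≤ n) :
    ∑ _x : Fin n → Bool, i ≤ ∑ x, ∑ b, incLen c b i x := by
  induction i with
  | zero => simp
  | succ i ih =>
    calc ∑ _x : Fin n → Bool, (i + 1) = ∑ _x : Fin n → Bool, i + ∑ _x : Fin n → Bool, 1 :=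
          Finset.sum_add_distrib
      _ ≤ ∑ x, (∑ b, incLen c b i x + 1) := by
          rw [Finset.sum_add_distrib]
          exact add_le_add_left (ih (by omega)) _
      _ ≤ ∑ x, ∑ b, incLen c b (i + 1) x := sum_incLen_add_one_le c (by omega)

end Counting

/-- Every 2-colouring of the edges of `Q n` contains a monochromatic geodesic of length
`⌈n/2⌉`. -/
theorem stmt10 (n : ℕ) (c : Sym2 (Fin n → Bool) → Bool) :
    ∃ (u v : Fin n → Bool) (p : (Q n).Walk u v),
      IsGeodesic p ∧ p.length = (n + 1) / 2 ∧ ∃ b, ∀ e ∈ p.edges, c e = b := by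
  obtain ⟨x, -, hx⟩ := Finset.exists_le_of_sum_le Finset.univ_nonempty (sum_le_sum_incLen c le_rfl)
  obtain ⟨b, hb⟩ : ∃ b, (n + 1) / 2 ≤ incLen c b n x := by
    rw [Fintype.sum_bool] at hx
    by_cases h : (n + 1) / 2 ≤ incLen c true n x
    exacts [⟨true, h⟩, ⟨false, by omega⟩]
  obtain ⟨u, p, hlen, -, hnd, hcol⟩ := (hasMonoGeodesic_incLen c b n x).of_le hb
  exact ⟨u, x, p, isGeodesic_of_nodup_dirs p hnd, hlen, b, hcol⟩
end
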